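/- Let X be a random field on [0,∞)² with self-similar covariance of index (H₁,H₂), H₁, H₂ ∈ (0,1), and with second-moment stationary rectangular increments. Then for all s = (s₁,s₂), t = (t₁,t₂) ∈ [0,∞)²: E[X(t₁,t₂)·X(s₁,s₂)] + E[X(t₁,s₂)·X(s₁,t₂)] = (1/2)·(t₁^{2H₁} + s₁^{2H₁} − |t₁ − s₁|^{2H₁})·(t₂^{2H₂} + s₂^{2H₂} − |t₂ − s₂|^{2H₂})·E[X(1,1)²]. -/

import Mathlib

open MeasureTheory Real

/-!
Scaling one coordinate by `2` shows that `X` vanishes a.s. on the axes, and self-similarity gives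
`E[X(a, b)²] = a^{2H₁} b^{2H₂} E[X(1, 1)²]`. Stationarity then yields the second moment
`(q₁ - p₁)^{2H₁} (q₂ - p₂)^{2H₂} E[X(1, 1)²]` of every rectangular increment `Δ_p X(q)`, and
polarization turns these into the covariances of `X` along horizontal and vertical lines. For
`t ≤ s`, the sum of the two diagonal products of the corners of `[t, s]` equals the two horizontal
edge products minus the product of the two vertical differences, whose expectation is again
obtained by polarization from `E[(Δ_t X(s))²]`.

No measurability of `X` is assumed. An increment is integrable because its integral is nonzero
(a non-integrable function has integral `0`), or because it vanishes; a diagonal product is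
measurable because it can be expressed through the edge products.
-/

section SquareIntegrable

variable {Ω : Type*} [MeasurableSpace Ω] {P : Measure Ω} {f g u v : Ω → ℝ}

lemma ae_eq_zero_of_integral_sq_eq_zero (hf : Integrable (fun ω => f ω ^ 2) P)
    (h : ∫ ω, f ω ^ 2 ∂P = 0) : f =ᵐ[P] 0 := by
  filter_upwards [(integral_eq_zero_iff_of_nonneg (fun ω => sq_nonneg (f ω)) hf).mp h] with ω hω
  exact pow_eq_zero_iff two_ne_zero |>.mp hω

lemma integrable_mul_of_integrable_sq (hfg : AEStronglyMeasurable (fun ω => f ω * g ω) P)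
    (hf : Integrable (fun ω => f ω ^ 2) P) (hg : Integrable (fun ω => g ω ^ 2) P) :
    Integrable (fun ω => f ω * g ω) P := by
  refine (hf.add hg).mono' hfg (ae_of_all _ fun ω => ?_)
  rw [Pi.add_apply, norm_mul, Real.norm_eq_abs, Real.norm_eq_abs]
  nlinarith [sq_nonneg (|f ω| - |g ω|), sq_abs (f ω), sq_abs (g ω)]

lemma integrable_mul_of_integrable_sq_sub (hf : Integrable (fun ω => f ω ^ 2) P)
    (hg : Integrable (fun ω => g ω ^ 2) P) (hfg : Integrable (fun ω => (f ω - g ω) ^ 2) P) :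
    Integrable (fun ω => f ω * g ω) P := by
  have e : (fun ω => f ω * g ω) = fun ω => (f ω ^ 2 + g ω ^ 2 - (f ω - g ω) ^ 2) / 2 := by
    funext ω; ring
  rw [e]
  exact ((hf.add hg).sub hfg).div_const 2

lemma integral_mul_of_integrable_sq_sub (hf : Integrable (fun ω => f ω ^ 2) P)
    (hg : Integrable (fun ω => g ω ^ 2) P) (hfg : Integrable (fun ω => (f ω - g ω) ^ 2) P) :
    ∫ ω, f ω * g ω ∂P
      = (∫ ω, f ω ^ 2 ∂P + ∫ ω, g ω ^ 2 ∂P - ∫ ω, (f ω - g ω) ^ 2 ∂P) / 2 := by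
  have e : (fun ω => f ω * g ω) = fun ω => (f ω ^ 2 + g ω ^ 2 - (f ω - g ω) ^ 2) / 2 := by
    funext ω; ring
  rw [e, integral_div, integral_sub (by fun_prop) hfg, integral_add hf hg]

/-- Off `{u = v = 0}`, `f g = ((f u) (u g) + (f v) (v g)) / (u² + v²)`; on it, `f g = f g + u v`. -/
lemma aestronglyMeasurable_mul_of_cross (hu : AEStronglyMeasurable (fun ω => u ω ^ 2) P)
    (hv : AEStronglyMeasurable (fun ω => v ω ^ 2) P)
    (hfu : AEStronglyMeasurable (fun ω => f ω * u ω) P)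
    (hug : AEStronglyMeasurable (fun ω => u ω * g ω) P)
    (hfv : AEStronglyMeasurable (fun ω => f ω * v ω) P)
    (hvg : AEStronglyMeasurable (fun ω => v ω * g ω) P)
    (hsum : AEStronglyMeasurable (fun ω => f ω * g ω + u ω * v ω) P) :
    AEStronglyMeasurable (fun ω => f ω * g ω) P := by
  let φ : ℝ × ℝ × ℝ → ℝ := fun p => if p.1 = 0 then p.2.2 else p.2.1 / p.1
  have hφ : Measurable φ :=
    Measurable.ite (measurableSet_eq_fun measurable_fst measurable_const)
      measurable_snd.snd (measurable_snd.fst.div measurable_fst)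
  have hK : AEMeasurable (fun ω => u ω ^ 2 + v ω ^ 2) P := (hu.add hv).aemeasurable
  have hM : AEMeasurable (fun ω => f ω * u ω * (u ω * g ω) + f ω * v ω * (v ω * g ω)) P :=
    ((hfu.mul hug).add (hfv.mul hvg)).aemeasurable
  refine (hφ.comp_aemeasurable (hK.prodMk (hM.prodMk hsum.aemeasurable))).aestronglyMeasurable
    |>.congr (ae_of_all _ fun ω => ?_)
  show (if u ω ^ 2 + v ω ^ 2 = 0 then _ else _) = _
  split_ifs with hK0
  · have hu0 : u ω = 0 := by nlinarith [sq_nonneg (u ω), sq_nonneg (v ω)]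
    have hv0 : v ω = 0 := by nlinarith [sq_nonneg (u ω), sq_nonneg (v ω)]
    simp [hu0, hv0]
  · rw [div_eq_iff hK0]
    ring

lemma integral_mul_add_integral_mul_of_cross (hf : Integrable (fun ω => f ω ^ 2) P)
    (hg : Integrable (fun ω => g ω ^ 2) P) (hu : Integrable (fun ω => u ω ^ 2) P)
    (hv : Integrable (fun ω => v ω ^ 2) P) (hfu : Integrable (fun ω => f ω * u ω) P)
    (hug : Integrable (fun ω => u ω * g ω) P) (hfv : Integrable (fun ω => f ω * v ω) P)
    (hvg : Integrable (fun ω => v ω * g ω) P) (hgv : Integrable (fun ω => (g ω - v ω) ^ 2) P)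
    (huf : Integrable (fun ω => (u ω - f ω) ^ 2) P)
    (hrect : Integrable (fun ω => (g ω - u ω - v ω + f ω) ^ 2) P) :
    ∫ ω, f ω * g ω ∂P + ∫ ω, u ω * v ω ∂P
      = ∫ ω, u ω * g ω ∂P + ∫ ω, f ω * v ω ∂P
        - (∫ ω, (g ω - v ω) ^ 2 ∂P + ∫ ω, (u ω - f ω) ^ 2 ∂P
          - ∫ ω, (g ω - u ω - v ω + f ω) ^ 2 ∂P) / 2 := by
  have hrect_eq : (fun ω => (g ω - u ω - v ω + f ω) ^ 2)
      = fun ω => (g ω - v ω - (u ω - f ω)) ^ 2 := by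
    funext ω; ring
  rw [hrect_eq] at hrect ⊢
  have hsum : (fun ω => f ω * g ω + u ω * v ω)
      = fun ω => u ω * g ω + f ω * v ω - (g ω - v ω) * (u ω - f ω) := by
    funext ω; ring
  have hdiff := integrable_mul_of_integrable_sq_sub hgv huf hrect
  have hdiag : Integrable (fun ω => f ω * g ω + u ω * v ω) P := by
    rw [hsum]; fun_prop
  have hfg : Integrable (fun ω => f ω * g ω) P :=
    integrable_mul_of_integrable_sq (aestronglyMeasurable_mul_of_cross hu.1 hv.1 hfu.1 hug.1
      hfv.1 hvg.1 hdiag.1) hf hg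
  have huv : Integrable (fun ω => u ω * v ω) P :=
    (hdiag.sub hfg).congr (ae_of_all _ fun ω => by simp)
  rw [← integral_add hfg huv, hsum, integral_sub (by fun_prop) hdiff, integral_add hug hfv,
    integral_mul_of_integrable_sq_sub hgv huf hrect]

end SquareIntegrable

/-- The covariance `E[B_s B_t]` of a standard fractional Brownian motion of index `H`. -/
noncomputable def fbmCovariance (H s t : ℝ) : ℝ :=
  (s ^ (2 * H) + t ^ (2 * H) - |s - t| ^ (2 * H)) / 2

lemma fbmCovariance_comm (H s t : ℝ) : fbmCovariance H s t = fbmCovariance H t s := by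
  rw [fbmCovariance, fbmCovariance, abs_sub_comm, add_comm (s ^ _)]

def rectIncrement {Ω : Type*} (X : ℝ → ℝ → Ω → ℝ) (u₁ u₂ v₁ v₂ : ℝ) (ω : Ω) : ℝ :=
  X v₁ v₂ ω - X u₁ v₂ ω - X v₁ u₂ ω + X u₁ u₂ ω

lemma rectIncrement_swap {Ω : Type*} (X : ℝ → ℝ → Ω → ℝ) (u₁ u₂ v₁ v₂ : ℝ) :
    rectIncrement (fun t₁ t₂ => X t₂ t₁) u₁ u₂ v₁ v₂ = rectIncrement X u₂ u₁ v₂ v₁ := by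
  funext ω; simp only [rectIncrement]; ring

section RandomField

variable {Ω : Type*} [MeasurableSpace Ω] {P : Measure Ω} {H₁ H₂ : ℝ} {X : ℝ → ℝ → Ω → ℝ}

variable (P) in
def HasSelfSimilarCovariance (H₁ H₂ : ℝ) (X : ℝ → ℝ → Ω → ℝ) : Prop :=
  ∀ a₁ a₂ : ℝ, 0 < a₁ → 0 < a₂ → ∀ t₁ t₂ s₁ s₂ : ℝ, 0 ≤ t₁ → 0 ≤ t₂ → 0 ≤ s₁ → 0 ≤ s₂ →
    ∫ ω, X (a₁ * t₁) (a₂ * t₂) ω * X (a₁ * s₁) (a₂ * s₂) ω ∂P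
      = a₁ ^ (2 * H₁) * a₂ ^ (2 * H₂) * ∫ ω, X t₁ t₂ ω * X s₁ s₂ ω ∂P

variable (P) in
def HasStationaryRectIncrements (X : ℝ → ℝ → Ω → ℝ) : Prop :=
  ∀ u₁ u₂ h₁ h₂ : ℝ, 0 ≤ u₁ → 0 ≤ u₂ → 0 ≤ h₁ → 0 ≤ h₂ →
    ∫ ω, rectIncrement X u₁ u₂ (u₁ + h₁) (u₂ + h₂) ω ^ 2 ∂P
      = ∫ ω, rectIncrement X 0 0 h₁ h₂ ω ^ 2 ∂P

lemma HasSelfSimilarCovariance.swap (h : HasSelfSimilarCovariance P H₁ H₂ X) :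
    HasSelfSimilarCovariance P H₂ H₁ (fun t₁ t₂ => X t₂ t₁) := by
  intro a₁ a₂ ha₁ ha₂ t₁ t₂ s₁ s₂ ht₁ ht₂ hs₁ hs₂
  rw [h a₂ a₁ ha₂ ha₁ t₂ t₁ s₂ s₁ ht₂ ht₁ hs₂ hs₁, mul_comm (a₂ ^ _)]

lemma HasStationaryRectIncrements.swap (h : HasStationaryRectIncrements P X) :
    HasStationaryRectIncrements P (fun t₁ t₂ => X t₂ t₁) := by
  intro u₁ u₂ h₁ h₂ hu₁ hu₂ hh₁ hh₂
  simpa only [rectIncrement_swap] using h u₂ u₁ h₂ h₁ hu₂ hu₁ hh₂ hh₁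

namespace HasSelfSimilarCovariance

/-- Scaling the first coordinate by `2` multiplies `E[X(0, u)²]` by `2 ^ (2 H₁) ≠ 1`. -/
lemma integral_sq_zero_left (h : HasSelfSimilarCovariance P H₁ H₂ X) (hH₁ : H₁ ≠ 0) {u : ℝ}
    (hu : 0 ≤ u) : ∫ ω, X 0 u ω ^ 2 ∂P = 0 := by
  have hscale := h 2 1 two_pos one_pos 0 u 0 u le_rfl hu le_rfl hu
  simp only [mul_zero, one_mul, one_rpow, mul_one] at hscale
  have h2 : (2 : ℝ) ^ (2 * H₁) ≠ 1 := by
    rw [← rpow_zero 2, Ne, rpow_right_inj two_pos (by norm_num)]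
    exact mul_ne_zero two_ne_zero hH₁
  simp_rw [sq]
  by_contra hne
  exact h2 (mul_right_cancel₀ hne (hscale.symm.trans (one_mul _).symm))

lemma integral_sq (h : HasSelfSimilarCovariance P H₁ H₂ X) (hH₁ : H₁ ≠ 0) (hH₂ : H₂ ≠ 0)
    {a b : ℝ} (ha : 0 ≤ a) (hb : 0 ≤ b) :
    ∫ ω, X a b ω ^ 2 ∂P = a ^ (2 * H₁) * b ^ (2 * H₂) * ∫ ω, X 1 1 ω ^ 2 ∂P := by
  rcases ha.eq_or_lt with rfl | ha
  · rw [h.integral_sq_zero_left hH₁ hb, zero_rpow (mul_ne_zero two_ne_zero hH₁)]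
    ring
  rcases hb.eq_or_lt with rfl | hb
  · rw [h.swap.integral_sq_zero_left hH₂ ha.le, zero_rpow (mul_ne_zero two_ne_zero hH₂)]
    ring
  simpa only [mul_one, ← sq] using
    h a b ha hb 1 1 1 1 zero_le_one zero_le_one zero_le_one zero_le_one

lemma ae_eq_zero_left (h : HasSelfSimilarCovariance P H₁ H₂ X) (hH₁ : H₁ ≠ 0) {u : ℝ}
    (hu : 0 ≤ u) (hX : Integrable (fun ω => X 0 u ω ^ 2) P) : X 0 u =ᵐ[P] 0 :=
  ae_eq_zero_of_integral_sq_eq_zero hX (h.integral_sq_zero_left hH₁ hu)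

lemma ae_eq_zero_right (h : HasSelfSimilarCovariance P H₁ H₂ X) (hH₂ : H₂ ≠ 0) {u : ℝ}
    (hu : 0 ≤ u) (hX : Integrable (fun ω => X u 0 ω ^ 2) P) : X u 0 =ᵐ[P] 0 :=
  h.swap.ae_eq_zero_left hH₂ hu hX

lemma ae_eq_zero (h : HasSelfSimilarCovariance P H₁ H₂ X) (hH₁ : H₁ ≠ 0) (hH₂ : H₂ ≠ 0)
    {a b : ℝ} (ha : 0 ≤ a) (hb : 0 ≤ b) (hX : Integrable (fun ω => X a b ω ^ 2) P)
    (h0 : a ^ (2 * H₁) * b ^ (2 * H₂) * ∫ ω, X 1 1 ω ^ 2 ∂P = 0) : X a b =ᵐ[P] 0 :=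
  ae_eq_zero_of_integral_sq_eq_zero hX ((h.integral_sq hH₁ hH₂ ha hb).trans h0)

end HasSelfSimilarCovariance

variable (P) in
structure IsSelfSimilarStationaryField (H₁ H₂ : ℝ) (X : ℝ → ℝ → Ω → ℝ) : Prop where
  integrable_sq : ∀ t₁ t₂ : ℝ, 0 ≤ t₁ → 0 ≤ t₂ → Integrable (fun ω => X t₁ t₂ ω ^ 2) P
  selfSimilar : HasSelfSimilarCovariance P H₁ H₂ X
  stationary : HasStationaryRectIncrements P X

namespace IsSelfSimilarStationaryField

lemma swap (hX : IsSelfSimilarStationaryField P H₁ H₂ X) :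
    IsSelfSimilarStationaryField P H₂ H₁ (fun t₁ t₂ => X t₂ t₁) :=
  ⟨fun t₁ t₂ ht₁ ht₂ => hX.integrable_sq t₂ t₁ ht₂ ht₁, hX.selfSimilar.swap, hX.stationary.swap⟩

lemma integral_rectIncrement_sq (hX : IsSelfSimilarStationaryField P H₁ H₂ X) (hH₁ : H₁ ≠ 0)
    (hH₂ : H₂ ≠ 0) {p₁ p₂ q₁ q₂ : ℝ} (hp₁ : 0 ≤ p₁) (hp₂ : 0 ≤ p₂) (h₁ : p₁ ≤ q₁)
    (h₂ : p₂ ≤ q₂) :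
    ∫ ω, rectIncrement X p₁ p₂ q₁ q₂ ω ^ 2 ∂P
      = (q₁ - p₁) ^ (2 * H₁) * (q₂ - p₂) ^ (2 * H₂) * ∫ ω, X 1 1 ω ^ 2 ∂P := by
  have hq₁ := sub_nonneg.2 h₁
  have hq₂ := sub_nonneg.2 h₂
  have hstat := hX.stationary p₁ p₂ (q₁ - p₁) (q₂ - p₂) hp₁ hp₂ hq₁ hq₂
  rw [add_sub_cancel, add_sub_cancel] at hstat
  rw [hstat, ← hX.selfSimilar.integral_sq hH₁ hH₂ hq₁ hq₂]
  refine integral_congr_ae ?_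
  filter_upwards [hX.selfSimilar.ae_eq_zero_left hH₁ hq₂ (hX.integrable_sq _ _ le_rfl hq₂),
    hX.selfSimilar.ae_eq_zero_right hH₂ hq₁ (hX.integrable_sq _ _ hq₁ le_rfl),
    hX.selfSimilar.ae_eq_zero_left hH₁ le_rfl (hX.integrable_sq _ _ le_rfl le_rfl)]
    with ω h0v hu0 h00
  simp only [rectIncrement, h0v, hu0, h00, Pi.zero_apply, sub_zero, add_zero]

lemma integrable_rectIncrement_sq (hX : IsSelfSimilarStationaryField P H₁ H₂ X) (hH₁ : H₁ ≠ 0)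
    (hH₂ : H₂ ≠ 0) {p₁ p₂ q₁ q₂ : ℝ} (hp₁ : 0 ≤ p₁) (hp₂ : 0 ≤ p₂) (h₁ : p₁ ≤ q₁)
    (h₂ : p₂ ≤ q₂) :
    Integrable (fun ω => rectIncrement X p₁ p₂ q₁ q₂ ω ^ 2) P := by
  by_cases hγ : ∫ ω, X 1 1 ω ^ 2 ∂P = 0
  · have hzero : ∀ {a b : ℝ}, 0 ≤ a → 0 ≤ b → X a b =ᵐ[P] 0 := fun ha hb =>
      hX.selfSimilar.ae_eq_zero hH₁ hH₂ ha hb (hX.integrable_sq _ _ ha hb)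
        (by rw [hγ, mul_zero])
    have hq₁ := hp₁.trans h₁
    have hq₂ := hp₂.trans h₂
    refine (integrable_zero Ω ℝ P).congr ?_
    filter_upwards [hzero hq₁ hq₂, hzero hp₁ hq₂, hzero hq₁ hp₂, hzero hp₁ hp₂]
      with ω hqq hpq hqp hpp
    simp [rectIncrement, hqq, hpq, hqp, hpp]
  rcases h₁.eq_or_lt with rfl | h₁
  · simp [rectIncrement]
  rcases h₂.eq_or_lt with rfl | h₂
  · simp [rectIncrement]
  refine Integrable.of_integral_ne_zero ?_
  rw [hX.integral_rectIncrement_sq hH₁ hH₂ hp₁ hp₂ h₁.le h₂.le]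
  exact mul_ne_zero (mul_ne_zero (rpow_pos_of_pos (sub_pos.2 h₁) _).ne'
    (rpow_pos_of_pos (sub_pos.2 h₂) _).ne') hγ

lemma horizontal_sq_sub (hX : IsSelfSimilarStationaryField P H₁ H₂ X) (hH₁ : H₁ ≠ 0)
    (hH₂ : H₂ ≠ 0) {a b y : ℝ} (ha : 0 ≤ a) (hb : 0 ≤ b) (hy : 0 ≤ y) :
    Integrable (fun ω => (X a y ω - X b y ω) ^ 2) P ∧
      ∫ ω, (X a y ω - X b y ω) ^ 2 ∂P
        = |a - b| ^ (2 * H₁) * y ^ (2 * H₂) * ∫ ω, X 1 1 ω ^ 2 ∂P := by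
  wlog hab : a ≤ b generalizing a b
  · simpa only [sub_sq_comm (X b y _), abs_sub_comm b] using this hb ha (le_of_not_ge hab)
  have hrow : (fun ω => rectIncrement X a 0 b y ω ^ 2)
      =ᵐ[P] fun ω => (X a y ω - X b y ω) ^ 2 := by
    filter_upwards [hX.selfSimilar.ae_eq_zero_right hH₂ hb (hX.integrable_sq _ _ hb le_rfl),
      hX.selfSimilar.ae_eq_zero_right hH₂ ha (hX.integrable_sq _ _ ha le_rfl)] with ω hb0 ha0
    simp only [rectIncrement, hb0, ha0, Pi.zero_apply, sub_zero, add_zero,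
      sub_sq_comm (X b y ω)]
  refine ⟨(hX.integrable_rectIncrement_sq hH₁ hH₂ ha le_rfl hab hy).congr hrow, ?_⟩
  rw [← integral_congr_ae hrow, hX.integral_rectIncrement_sq hH₁ hH₂ ha le_rfl hab hy,
    sub_zero, abs_sub_comm, abs_of_nonneg (sub_nonneg.2 hab)]

lemma horizontal_mul (hX : IsSelfSimilarStationaryField P H₁ H₂ X) (hH₁ : H₁ ≠ 0)
    (hH₂ : H₂ ≠ 0) {a b y : ℝ} (ha : 0 ≤ a) (hb : 0 ≤ b) (hy : 0 ≤ y) :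
    Integrable (fun ω => X a y ω * X b y ω) P ∧
      ∫ ω, X a y ω * X b y ω ∂P
        = fbmCovariance H₁ a b * y ^ (2 * H₂) * ∫ ω, X 1 1 ω ^ 2 ∂P := by
  obtain ⟨hi, hv⟩ := hX.horizontal_sq_sub hH₁ hH₂ ha hb hy
  have ha2 := hX.integrable_sq a y ha hy
  have hb2 := hX.integrable_sq b y hb hy
  refine ⟨integrable_mul_of_integrable_sq_sub ha2 hb2 hi, ?_⟩
  rw [integral_mul_of_integrable_sq_sub ha2 hb2 hi, hv,
    hX.selfSimilar.integral_sq hH₁ hH₂ ha hy, hX.selfSimilar.integral_sq hH₁ hH₂ hb hy,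
    fbmCovariance]
  ring

lemma vertical_sq_sub (hX : IsSelfSimilarStationaryField P H₁ H₂ X) (hH₁ : H₁ ≠ 0)
    (hH₂ : H₂ ≠ 0) {x c d : ℝ} (hx : 0 ≤ x) (hc : 0 ≤ c) (hd : 0 ≤ d) :
    Integrable (fun ω => (X x c ω - X x d ω) ^ 2) P ∧
      ∫ ω, (X x c ω - X x d ω) ^ 2 ∂P
        = x ^ (2 * H₁) * |c - d| ^ (2 * H₂) * ∫ ω, X 1 1 ω ^ 2 ∂P := by
  rw [mul_comm (x ^ _)]
  exact hX.swap.horizontal_sq_sub hH₂ hH₁ hc hd hx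

lemma vertical_mul (hX : IsSelfSimilarStationaryField P H₁ H₂ X) (hH₁ : H₁ ≠ 0)
    (hH₂ : H₂ ≠ 0) {x c d : ℝ} (hx : 0 ≤ x) (hc : 0 ≤ c) (hd : 0 ≤ d) :
    Integrable (fun ω => X x c ω * X x d ω) P ∧
      ∫ ω, X x c ω * X x d ω ∂P
        = x ^ (2 * H₁) * fbmCovariance H₂ c d * ∫ ω, X 1 1 ω ^ 2 ∂P := by
  rw [mul_comm (x ^ _)]
  exact hX.swap.horizontal_mul hH₂ hH₁ hc hd hx

lemma integral_mul_add_integral_mul_of_le (hX : IsSelfSimilarStationaryField P H₁ H₂ X)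
    (hH₁ : H₁ ≠ 0) (hH₂ : H₂ ≠ 0) {t₁ t₂ s₁ s₂ : ℝ} (ht₁ : 0 ≤ t₁) (ht₂ : 0 ≤ t₂)
    (h₁ : t₁ ≤ s₁) (h₂ : t₂ ≤ s₂) :
    ∫ ω, X t₁ t₂ ω * X s₁ s₂ ω ∂P + ∫ ω, X t₁ s₂ ω * X s₁ t₂ ω ∂P
      = 2 * fbmCovariance H₁ t₁ s₁ * fbmCovariance H₂ t₂ s₂ * ∫ ω, X 1 1 ω ^ 2 ∂P := by
  have hs₁ := ht₁.trans h₁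
  have hs₂ := ht₂.trans h₂
  obtain ⟨iTop, vTop⟩ := hX.horizontal_mul hH₁ hH₂ ht₁ hs₁ hs₂
  obtain ⟨iBot, vBot⟩ := hX.horizontal_mul hH₁ hH₂ ht₁ hs₁ ht₂
  obtain ⟨iLeft, -⟩ := hX.vertical_mul hH₁ hH₂ ht₁ ht₂ hs₂
  obtain ⟨iRight, -⟩ := hX.vertical_mul hH₁ hH₂ hs₁ ht₂ hs₂
  obtain ⟨iRightSq, vRightSq⟩ := hX.vertical_sq_sub hH₁ hH₂ hs₁ hs₂ ht₂
  obtain ⟨iLeftSq, vLeftSq⟩ := hX.vertical_sq_sub hH₁ hH₂ ht₁ hs₂ ht₂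
  have iRect := hX.integrable_rectIncrement_sq hH₁ hH₂ ht₁ ht₂ h₁ h₂
  have vRect := hX.integral_rectIncrement_sq hH₁ hH₂ ht₁ ht₂ h₁ h₂
  simp only [rectIncrement] at iRect vRect
  rw [integral_mul_add_integral_mul_of_cross (hX.integrable_sq t₁ t₂ ht₁ ht₂)
    (hX.integrable_sq s₁ s₂ hs₁ hs₂) (hX.integrable_sq t₁ s₂ ht₁ hs₂)
    (hX.integrable_sq s₁ t₂ hs₁ ht₂) iLeft iTop iBot iRight iRightSq iLeftSq iRect,
    vTop, vBot, vRightSq, vLeftSq, vRect, fbmCovariance, fbmCovariance, abs_sub_comm t₁,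
    abs_sub_comm t₂, abs_of_nonneg (sub_nonneg.2 h₁), abs_of_nonneg (sub_nonneg.2 h₂)]
  ring

/-- Exchanging `t₁ ↔ s₁` (or `t₂ ↔ s₂`) swaps the two covariances, so we may assume `t ≤ s`. -/
lemma integral_mul_add_integral_mul (hX : IsSelfSimilarStationaryField P H₁ H₂ X)
    (hH₁ : H₁ ≠ 0) (hH₂ : H₂ ≠ 0) {t₁ t₂ s₁ s₂ : ℝ} (ht₁ : 0 ≤ t₁) (ht₂ : 0 ≤ t₂)
    (hs₁ : 0 ≤ s₁) (hs₂ : 0 ≤ s₂) :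
    ∫ ω, X t₁ t₂ ω * X s₁ s₂ ω ∂P + ∫ ω, X t₁ s₂ ω * X s₁ t₂ ω ∂P
      = 2 * fbmCovariance H₁ t₁ s₁ * fbmCovariance H₂ t₂ s₂ * ∫ ω, X 1 1 ω ^ 2 ∂P := by
  wlog h₁ : t₁ ≤ s₁ generalizing t₁ s₁
  · have hswap := this hs₁ ht₁ (le_of_not_ge h₁)
    simp only [mul_comm (X s₁ _ _), fbmCovariance_comm H₁ s₁] at hswap
    rw [← hswap, add_comm]
  wlog h₂ : t₂ ≤ s₂ generalizing t₂ s₂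
  · rw [add_comm, this hs₂ ht₂ (le_of_not_ge h₂), fbmCovariance_comm H₂]
  exact hX.integral_mul_add_integral_mul_of_le hH₁ hH₂ ht₁ ht₂ h₁ h₂

end IsSelfSimilarStationaryField

end RandomField

theorem lemma3_sum_of_covariances_general
    {Ω : Type*} [MeasurableSpace Ω] (P : Measure Ω)
    (H₁ H₂ : ℝ) (hH₁ : H₁ ∈ Set.Ioo (0:ℝ) 1) (hH₂ : H₂ ∈ Set.Ioo (0:ℝ) 1)
    (X : ℝ → ℝ → Ω → ℝ)
    (hL2 : ∀ t₁ t₂ : ℝ, 0 ≤ t₁ → 0 ≤ t₂ →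
      Integrable (fun ω => (X t₁ t₂ ω) ^ 2) P)
    (hss : ∀ a₁ a₂ : ℝ, 0 < a₁ → 0 < a₂ →
      ∀ t₁ t₂ s₁ s₂ : ℝ, 0 ≤ t₁ → 0 ≤ t₂ → 0 ≤ s₁ → 0 ≤ s₂ →
        ∫ ω, X (a₁ * t₁) (a₂ * t₂) ω * X (a₁ * s₁) (a₂ * s₂) ω ∂P
          = a₁ ^ (2 * H₁) * a₂ ^ (2 * H₂) * ∫ ω, X t₁ t₂ ω * X s₁ s₂ ω ∂P)
    (hsi : ∀ u₁ u₂ h₁ h₂ : ℝ, 0 ≤ u₁ → 0 ≤ u₂ → 0 ≤ h₁ → 0 ≤ h₂ →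
      ∫ ω, (X (u₁ + h₁) (u₂ + h₂) ω - X u₁ (u₂ + h₂) ω
            - X (u₁ + h₁) u₂ ω + X u₁ u₂ ω) ^ 2 ∂P
        = ∫ ω, (X h₁ h₂ ω - X 0 h₂ ω - X h₁ 0 ω + X 0 0 ω) ^ 2 ∂P) :
    ∀ t₁ t₂ s₁ s₂ : ℝ, 0 ≤ t₁ → 0 ≤ t₂ → 0 ≤ s₁ → 0 ≤ s₂ →
      (∫ ω, X t₁ t₂ ω * X s₁ s₂ ω ∂P) + (∫ ω, X t₁ s₂ ω * X s₁ t₂ ω ∂P)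
        = (1 / 2) * (t₁ ^ (2 * H₁) + s₁ ^ (2 * H₁) - |t₁ - s₁| ^ (2 * H₁))
          * (t₂ ^ (2 * H₂) + s₂ ^ (2 * H₂) - |t₂ - s₂| ^ (2 * H₂))
          * ∫ ω, (X 1 1 ω) ^ 2 ∂P := by
  intro t₁ t₂ s₁ s₂ ht₁ ht₂ hs₁ hs₂
  have hX : IsSelfSimilarStationaryField P H₁ H₂ X := ⟨hL2, hss, hsi⟩
  rw [hX.integral_mul_add_integral_mul hH₁.1.ne' hH₂.1.ne' ht₁ ht₂ hs₁ hs₂, fbmCovariance,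
    fbmCovariance]
  ring

/-- Lemma 3 of the paper, for fields with self-similar covariance and
second-moment stationary rectangular increments. -/
theorem lemma3_sum_of_covariances
    {Ω : Type*} [MeasurableSpace Ω] (P : Measure Ω) [IsProbabilityMeasure P]
    (H₁ H₂ : ℝ) (hH₁ : H₁ ∈ Set.Ioo (0:ℝ) 1) (hH₂ : H₂ ∈ Set.Ioo (0:ℝ) 1)
    (X : ℝ → ℝ → Ω → ℝ)
    (hL2 : ∀ t₁ t₂ : ℝ, 0 ≤ t₁ → 0 ≤ t₂ →
      Integrable (fun ω => (X t₁ t₂ ω) ^ 2) P)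
    (hss : ∀ a₁ a₂ : ℝ, 0 < a₁ → 0 < a₂ →
      ∀ t₁ t₂ s₁ s₂ : ℝ, 0 ≤ t₁ → 0 ≤ t₂ → 0 ≤ s₁ → 0 ≤ s₂ →
        ∫ ω, X (a₁ * t₁) (a₂ * t₂) ω * X (a₁ * s₁) (a₂ * s₂) ω ∂P
          = a₁ ^ (2 * H₁) * a₂ ^ (2 * H₂) * ∫ ω, X t₁ t₂ ω * X s₁ s₂ ω ∂P)
    (hsi : ∀ u₁ u₂ h₁ h₂ : ℝ, 0 ≤ u₁ → 0 ≤ u₂ → 0 ≤ h₁ → 0 ≤ h₂ →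
      ∫ ω, (X (u₁ + h₁) (u₂ + h₂) ω - X u₁ (u₂ + h₂) ω
            - X (u₁ + h₁) u₂ ω + X u₁ u₂ ω) ^ 2 ∂P
        = ∫ ω, (X h₁ h₂ ω - X 0 h₂ ω - X h₁ 0 ω + X 0 0 ω) ^ 2 ∂P) :
    ∀ t₁ t₂ s₁ s₂ : ℝ, 0 ≤ t₁ → 0 ≤ t₂ → 0 ≤ s₁ → 0 ≤ s₂ →
      (∫ ω, X t₁ t₂ ω * X s₁ s₂ ω ∂P) + (∫ ω, X t₁ s₂ ω * X s₁ t₂ ω ∂P)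
        = (1 / 2) * (t₁ ^ (2 * H₁) + s₁ ^ (2 * H₁) - |t₁ - s₁| ^ (2 * H₁))
          * (t₂ ^ (2 * H₂) + s₂ ^ (2 * H₂) - |t₂ - s₂| ^ (2 * H₂))
          * ∫ ω, (X 1 1 ω) ^ 2 ∂P :=
  lemma3_sum_of_covariances_general P H₁ H₂ hH₁ hH₂ X hL2 hss hsi
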